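/- arXiv:math/9808070 — 9 statements merged into one kernel-verified Lean document; each statement's English description precedes it below -/
import Mathlib

section
/- Let p, q : [0,1] → ℂ be C¹ closed curves (p(0)=p(1), q(0)=q(1)). Then the total oriented area swept out by the moving segment from p(t) to q(t), namely (1/2)∫₀¹ ⟨i·(q(t) − p(t)), p'(t) + q'(t)⟩ dt, equals A_q − A_p, where A_γ = (1/2)∫₀¹ ⟨i·γ(t), γ'(t)⟩ dt is the oriented area enclosed by the closed curve γ. -/
/-!
Write `ω(z, w) = ⟨i z, w⟩ = Im(conj z · w)`, a bilinear antisymmetric form. Expanding,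
`ω(q - p, p' + q') = ω(q, q') - ω(p, p') + (ω(q', p) + ω(q, p'))`, and the bracket is the
derivative of `t ↦ ω(q t, p t)`, whose integral over a closed pair of curves vanishes.
-/

open intervalIntegral

/-- Real inner product on ℂ: ⟨z, w⟩ = Re(conj z · w). -/
noncomputable def cinner (z w : ℂ) : ℝ := ((starRingEnd ℂ) z * w).re

open Complex ComplexConjugate MeasureTheory Set

lemma cinner_I_mul (z w : ℂ) : cinner (I * z) w = (conj z * w).im := by
  simp only [cinner, map_mul, conj_I, mul_re, mul_im, neg_re, neg_im, I_re, I_im, conj_re, conj_im]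
  ring

lemma cinner_I_mul_sub_add (a b c d : ℂ) :
    cinner (I * (b - a)) (c + d)
      = cinner (I * b) d - cinner (I * a) c + (cinner (I * d) a + cinner (I * b) c) := by
  simp only [cinner_I_mul, map_sub, mul_im, conj_re, conj_im, add_re, add_im, sub_re, sub_im]
  ring

lemma HasDerivAt.cinner_I_mul {f g : ℝ → ℂ} {f' g' : ℂ} {t : ℝ} (hf : HasDerivAt f f' t)
    (hg : HasDerivAt g g' t) :
    HasDerivAt (fun s => cinner (I * f s) (g s))
      (cinner (I * f') (g t) + cinner (I * f t) g') t := by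
  simp only [_root_.cinner_I_mul, ← add_im]
  exact imCLM.hasFDerivAt.comp_hasDerivAt t (hf.star.fun_mul hg)

lemma intervalIntegrable_cinner_I_mul {f g : ℝ → ℂ} {a b : ℝ} (hab : a ≤ b)
    (hf : ContinuousOn f (Icc a b)) (hg : ContinuousOn g (Icc a b)) :
    IntervalIntegrable (fun t => cinner (I * f t) (g t)) volume a b := by
  refine ContinuousOn.intervalIntegrable_of_Icc hab ?_
  simp only [cinner]
  fun_prop

lemma integral_cinner_I_mul_deriv {f g f' g' : ℝ → ℂ} {a b : ℝ} (hab : a ≤ b)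
    (hf : ∀ t ∈ Icc a b, HasDerivAt f (f' t) t) (hg : ∀ t ∈ Icc a b, HasDerivAt g (g' t) t)
    (hf' : ContinuousOn f' (Icc a b)) (hg' : ContinuousOn g' (Icc a b)) :
    ∫ t in a..b, (cinner (I * f' t) (g t) + cinner (I * f t) (g' t))
      = cinner (I * f b) (g b) - cinner (I * f a) (g a) := by
  have hfc : ContinuousOn f (Icc a b) := fun t ht => (hf t ht).continuousAt.continuousWithinAt
  have hgc : ContinuousOn g (Icc a b) := fun t ht => (hg t ht).continuousAt.continuousWithinAt
  refine integral_eq_sub_of_hasDerivAt (f := fun t => cinner (I * f t) (g t)) (fun t ht => ?_)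
    ((intervalIntegrable_cinner_I_mul hab hf' hgc).add
      (intervalIntegrable_cinner_I_mul hab hfc hg'))
  rw [uIcc_of_le hab] at ht
  exact (hf t ht).cinner_I_mul (hg t ht)

/-- The total oriented area swept out by the moving segment from `p t` to `q t`
along two C¹ closed curves equals `A_q − A_p`, where
`A_γ = (1/2) ∫₀¹ ⟨i·γ, γ'⟩`. -/
theorem swept_area_eq_area_difference
    (p q p' q' : ℝ → ℂ)
    (hp : ∀ t ∈ Set.Icc (0:ℝ) 1, HasDerivAt p (p' t) t)
    (hq : ∀ t ∈ Set.Icc (0:ℝ) 1, HasDerivAt q (q' t) t)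
    (hp' : ContinuousOn p' (Set.Icc 0 1))
    (hq' : ContinuousOn q' (Set.Icc 0 1))
    (hpc : p 0 = p 1) (hqc : q 0 = q 1) :
    (1/2) * ∫ t in (0:ℝ)..1, cinner (Complex.I * (q t - p t)) (p' t + q' t)
      = (1/2) * (∫ t in (0:ℝ)..1, cinner (Complex.I * q t) (q' t))
        - (1/2) * (∫ t in (0:ℝ)..1, cinner (Complex.I * p t) (p' t)) := by
  have hp_cont : ContinuousOn p (Icc 0 1) := fun t ht => (hp t ht).continuousAt.continuousWithinAt
  have hq_cont : ContinuousOn q (Icc 0 1) := fun t ht => (hq t ht).continuousAt.continuousWithinAt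
  have hQ := intervalIntegrable_cinner_I_mul zero_le_one hq_cont hq'
  have hP := intervalIntegrable_cinner_I_mul zero_le_one hp_cont hp'
  have hX := (intervalIntegrable_cinner_I_mul zero_le_one hq' hp_cont).add
    (intervalIntegrable_cinner_I_mul zero_le_one hq_cont hp')
  have hcross := integral_cinner_I_mul_deriv zero_le_one hq hp hq' hp'
  rw [hpc, hqc, sub_self] at hcross
  simp_rw [cinner_I_mul_sub_add]
  rw [integral_add (hQ.sub hP) hX, integral_sub hQ hP, hcross]
  ring
end

section
/- Let R > ℓ > 0, set r = √(R² − ℓ²) and α = arcsin(ℓ/R), and define p(t) = r·exp(it) and q(t) = R·exp(i(t+α)). Then for all t ∈ ℝ: |q(t) − p(t)| = ℓ and p'(t) = (r/ℓ)·(q(t) − p(t)). Thus the circle of radius √(R² − ℓ²) is a closed tractrix of the circle of radius R: when the tracer point q of a planimeter of length ℓ traverses the circle of radius R, the chisel point can traverse the concentric circle of radius √(R² − ℓ²), always moving tangentially to the rod. -/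
/-!
The point `R e^{iα}` with `sin α = ℓ / R` is `r + iℓ`, so `q(t) = (r + iℓ) e^{it}` and the rod
`q(t) − p(t) = iℓ e^{it}` has length `ℓ` and is `ℓ / r` times the velocity `i r e^{it}` of `p`.
-/

open Complex

theorem Complex.exp_I_mul_arcsin {x : ℝ} (h₁ : -1 ≤ x) (h₂ : x ≤ 1) :
    exp (I * Real.arcsin x) = √(1 - x ^ 2) + I * x := by
  rw [mul_comm, exp_mul_I, ← ofReal_cos, ← ofReal_sin, Real.cos_arcsin,
    Real.sin_arcsin h₁ h₂, mul_comm]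

theorem Complex.ofReal_mul_exp_I_mul_arcsin_div {ℓ R : ℝ} (h : |ℓ| ≤ R) :
    (R : ℂ) * exp (I * Real.arcsin (ℓ / R)) = √(R ^ 2 - ℓ ^ 2) + I * ℓ := by
  rcases (abs_nonneg ℓ).trans h |>.eq_or_lt with hR | hR
  · obtain rfl : ℓ = 0 := abs_nonpos_iff.mp (hR ▸ h)
    simp [← hR]
  have hx : |ℓ / R| ≤ 1 := by rwa [abs_div, abs_of_pos hR, div_le_one hR]
  rw [exp_I_mul_arcsin (abs_le.mp hx).1 (abs_le.mp hx).2, mul_add, ← ofReal_mul,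
    ← Real.sqrt_sq hR.le, ← Real.sqrt_mul (sq_nonneg R), Real.sqrt_sq hR.le]
  have hRC : (R : ℂ) ≠ 0 := ofReal_ne_zero.mpr hR.ne'
  push_cast
  field_simp

theorem hasDerivAt_mul_exp_mul_ofReal (c w : ℂ) (t : ℝ) :
    HasDerivAt (fun s : ℝ => c * exp (w * s)) (c * (w * exp (w * t))) t := by
  have h : HasDerivAt (fun s : ℝ => w * (s : ℂ)) w t := by
    simpa using ((hasDerivAt_id t).ofReal_comp).const_mul w
  simpa [mul_comm w] using h.cexp.const_mul c

/-- The circle of radius `√(R² − ℓ²)` is a closed tractrix of the circle of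
radius `R > ℓ`: with `p(t) = r e^{it}` and `q(t) = R e^{i(t+α)}`,
`r = √(R² − ℓ²)`, `α = arcsin(ℓ/R)`, the rod has length `ℓ` and the chisel
point `p` always moves parallel to the rod `q − p`. -/
theorem circle_tractrix_of_circle
    (R ℓ : ℝ) (hℓ : 0 < ℓ) (hR : ℓ < R)
    (r α : ℝ) (hr : r = Real.sqrt (R^2 - ℓ^2)) (hα : α = Real.arcsin (ℓ / R))
    (p q : ℝ → ℂ)
    (hp : p = fun t : ℝ => (r : ℂ) * Complex.exp (Complex.I * (t : ℂ)))
    (hq : q = fun t : ℝ => (R : ℂ) * Complex.exp (Complex.I * (t + α))) :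
    ∀ t : ℝ,
      ‖q t - p t‖ = ℓ ∧
      HasDerivAt p (((r / ℓ : ℝ) : ℂ) * (q t - p t)) t := by
  have hRα : (R : ℂ) * exp (I * α) = r + I * ℓ := by
    rw [hα, hr, ofReal_mul_exp_I_mul_arcsin_div ((abs_of_pos hℓ).trans_lt hR).le]
  have rod : ∀ t : ℝ, q t - p t = I * ℓ * exp (I * t) := by
    intro t
    rw [hp, hq]
    simp only [mul_add, exp_add]
    linear_combination exp (I * t) * hRα
  intro t
  refine ⟨?_, ?_⟩
  · rw [rod, norm_mul, norm_mul, norm_exp_I_mul_ofReal, norm_I, norm_real,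
      Real.norm_of_nonneg hℓ.le, one_mul, mul_one]
  · have hℓC : (ℓ : ℂ) ≠ 0 := ofReal_ne_zero.mpr hℓ.ne'
    convert hp ▸ hasDerivAt_mul_exp_mul_ofReal r I t using 1
    rw [rod]
    push_cast
    field_simp
end

section
/- Let ℓ > 0, let v ∈ ℂ be nonzero, and let z₀ ∈ ℂ with |z₀| = 1. Set β = −v/(2ℓ) and ρ = |β| = |v|/(2ℓ), and define z(t) = (cosh(ρt)·z₀ + (β/ρ)·sinh(ρt)) / ((conj(β)/ρ)·sinh(ρt)·z₀ + cosh(ρt)). Then for all t ∈ ℝ: the denominator is nonzero, |z(t)| = 1, and ℓ·z'(t) = i·Im(conj(v)·z(t))·z(t). (Thus the evolution of the planimeter direction z = e^{iθ} when the tracer point moves in a straight line with constant velocity v, governed by ℓθ' = a sin θ − b cos θ for v = a + ib, is given by the Möbius action of a one-parameter subgroup of SU(1,1).) -/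
/-!
The curve is `t ↦ exp (t X) · z₀` for `X = [[0, β], [conj β, 0]]` acting by Möbius
transformations: `exp (t X) = [[cosh ρt, u sinh ρt], [conj u sinh ρt, cosh ρt]]` with
`u = β / ρ` on the unit circle, an element of `SU(1,1)`. Such a matrix `[[a, b], [conj b, conj a]]`
with `‖b‖ < ‖a‖` keeps the denominator `conj b w + conj a` away from zero and preserves the
unit circle. Differentiating gives the Riccati equation `z' = β - conj β z²`, and on the unit circle
`conj z = z⁻¹` turns `i Im(conj v z) z / ℓ` into exactly this right-hand side when `β = -v/(2ℓ)`.
-/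

open Complex ComplexConjugate

section Mobius

variable {a b w : ℂ}

theorem conj_mul_add_conj_ne_zero (hw : ‖w‖ = 1) (hab : ‖b‖ < ‖a‖) :
    conj b * w + conj a ≠ 0 := by
  intro h
  have : ‖conj b * w‖ = ‖conj a‖ := by rw [eq_neg_of_add_eq_zero_left h, norm_neg]
  rw [norm_mul, hw, mul_one, norm_conj, norm_conj] at this
  exact hab.ne this

theorem norm_conj_mul_add_conj (hw : ‖w‖ = 1) (a b : ℂ) :
    ‖conj b * w + conj a‖ = ‖a * w + b‖ := by
  have hww : w * conj w = 1 := by rw [mul_conj', hw]; norm_num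
  have : conj b * w + conj a = conj (conj w * (a * w + b)) := by
    simp only [map_mul, map_add, conj_conj]
    linear_combination (-conj a) * hww
  rw [this, norm_conj, norm_mul, norm_conj, hw, one_mul]

theorem norm_mobius_eq_one (hw : ‖w‖ = 1) (hD : conj b * w + conj a ≠ 0) :
    ‖(a * w + b) / (conj b * w + conj a)‖ = 1 := by
  rw [norm_div, norm_conj_mul_add_conj hw, div_self]
  rwa [← norm_conj_mul_add_conj hw, norm_ne_zero_iff]

end Mobius

/-- The Möbius action of `exp (ρ t [[0, u], [conj u, 0]])`, an element of `SU(1,1)` when `‖u‖ = 1`. -/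
noncomputable def mobiusFlow (u : ℂ) (ρ : ℝ) (w : ℂ) (t : ℝ) : ℂ :=
  ((Real.cosh (ρ * t) : ℂ) * w + u * (Real.sinh (ρ * t) : ℂ)) /
    (conj u * (Real.sinh (ρ * t) : ℂ) * w + (Real.cosh (ρ * t) : ℂ))

section MobiusFlow

variable {u w : ℂ}

theorem mobiusFlow_eq (u : ℂ) (ρ : ℝ) (w : ℂ) (t : ℝ) :
    mobiusFlow u ρ w t =
      ((Real.cosh (ρ * t) : ℂ) * w + u * (Real.sinh (ρ * t) : ℂ)) /
        (conj (u * (Real.sinh (ρ * t) : ℂ)) * w + conj (Real.cosh (ρ * t) : ℂ)) := by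
  simp only [mobiusFlow, map_mul, conj_ofReal]

theorem mobiusFlow_denom_ne_zero (hu : ‖u‖ = 1) (hw : ‖w‖ = 1) (ρ t : ℝ) :
    conj u * (Real.sinh (ρ * t) : ℂ) * w + (Real.cosh (ρ * t) : ℂ) ≠ 0 := by
  have hlt : ‖u * (Real.sinh (ρ * t) : ℂ)‖ < ‖(Real.cosh (ρ * t) : ℂ)‖ := by
    rw [norm_mul, hu, one_mul, norm_real, norm_real, Real.norm_eq_abs, Real.norm_eq_abs,
      abs_of_pos (Real.cosh_pos _), abs_lt]
    have h := Real.sinh_lt_cosh (-(ρ * t))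
    rw [Real.sinh_neg, Real.cosh_neg] at h
    exact ⟨by linarith, Real.sinh_lt_cosh _⟩
  simpa only [map_mul, conj_ofReal] using conj_mul_add_conj_ne_zero hw hlt

theorem norm_mobiusFlow (hu : ‖u‖ = 1) (hw : ‖w‖ = 1) (ρ t : ℝ) :
    ‖mobiusFlow u ρ w t‖ = 1 := by
  rw [mobiusFlow_eq]
  refine norm_mobius_eq_one hw ?_
  simpa only [map_mul, conj_ofReal] using mobiusFlow_denom_ne_zero hu hw ρ t

theorem hasDerivAt_ofReal_cosh_mul (ρ t : ℝ) :
    HasDerivAt (fun t : ℝ => (Real.cosh (ρ * t) : ℂ)) (ρ * Real.sinh (ρ * t)) t :=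
  ((Real.hasDerivAt_cosh (ρ * t)).comp t ((hasDerivAt_id t).const_mul ρ)).ofReal_comp.congr_deriv
    (by push_cast; ring)

theorem hasDerivAt_ofReal_sinh_mul (ρ t : ℝ) :
    HasDerivAt (fun t : ℝ => (Real.sinh (ρ * t) : ℂ)) (ρ * Real.cosh (ρ * t)) t :=
  ((Real.hasDerivAt_sinh (ρ * t)).comp t ((hasDerivAt_id t).const_mul ρ)).ofReal_comp.congr_deriv
    (by push_cast; ring)

theorem hasDerivAt_mobiusFlow (hu : ‖u‖ = 1) {ρ t : ℝ}
    (hD : conj u * (Real.sinh (ρ * t) : ℂ) * w + (Real.cosh (ρ * t) : ℂ) ≠ 0) :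
    HasDerivAt (mobiusFlow u ρ w) (ρ * (u - conj u * mobiusFlow u ρ w t ^ 2)) t := by
  have hc := hasDerivAt_ofReal_cosh_mul ρ t
  have hs := hasDerivAt_ofReal_sinh_mul ρ t
  have hq : HasDerivAt (mobiusFlow u ρ w) _ t :=
    ((hc.mul_const w).add (hs.const_mul u)).div (((hs.const_mul (conj u)).mul_const w).add hc) hD
  simp only [Pi.add_apply] at hq
  refine hq.congr_deriv ?_
  have huu : u * conj u = 1 := by rw [mul_conj', hu]; norm_num
  unfold mobiusFlow
  generalize (Real.cosh (ρ * t) : ℂ) = c at *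
  generalize (Real.sinh (ρ * t) : ℂ) = s at *
  rw [div_pow, mul_sub, mul_div_assoc', mul_div_assoc', eq_sub_iff_add_eq, ← add_div,
    div_eq_iff (pow_ne_zero 2 hD)]
  linear_combination (ρ : ℂ) * (u - conj u * w ^ 2) * s ^ 2 * huu

end MobiusFlow

theorem planimeter_field_eq_riccati {ℓ : ℝ} (hℓ : ℓ ≠ 0) (v : ℂ) {z : ℂ} (hz : ‖z‖ = 1) :
    I * (conj v * z).im * z / ℓ = -v / (2 * ℓ) - conj (-v / (2 * ℓ)) * z ^ 2 := by
  have hzz : z * conj z = 1 := by rw [mul_conj', hz]; norm_num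
  have him := sub_conj (conj v * z)
  push_cast [map_mul, conj_conj] at him
  have hℓc : (ℓ : ℂ) ≠ 0 := by exact_mod_cast hℓ
  simp only [map_div₀, map_neg, map_mul, map_ofNat, conj_ofReal]
  field_simp
  linear_combination (-z) * him - v * hzz

/-- Straight-line motion of the Prytz planimeter: the rod direction evolves by
the Möbius action of a one-parameter subgroup of SU(1,1). With `β = −v/(2ℓ)`,
`ρ = |v|/(2ℓ)`, the curve
`z(t) = (cosh(ρt) z₀ + (β/ρ) sinh(ρt)) / ((conj β/ρ) sinh(ρt) z₀ + cosh(ρt))`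
stays on the unit circle and satisfies `ℓ z' = i Im(conj v · z) z`. -/
theorem planimeter_straight_line_motion
    (ℓ : ℝ) (hℓ : 0 < ℓ) (v : ℂ) (hv : v ≠ 0) (z₀ : ℂ) (hz₀ : ‖z₀‖ = 1)
    (β : ℂ) (hβ : β = -v / (2 * ℓ))
    (ρ : ℝ) (hρ : ρ = ‖v‖ / (2 * ℓ))
    (z : ℝ → ℂ)
    (hz : z = fun t : ℝ =>
      ((Real.cosh (ρ * t) : ℂ) * z₀ + (β / (ρ : ℂ)) * (Real.sinh (ρ * t) : ℂ)) /
      (((starRingEnd ℂ) β / (ρ : ℂ)) * (Real.sinh (ρ * t) : ℂ) * z₀ + (Real.cosh (ρ * t) : ℂ))) :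
    ∀ t : ℝ,
      ((starRingEnd ℂ) β / (ρ : ℂ)) * (Real.sinh (ρ * t) : ℂ) * z₀ + (Real.cosh (ρ * t) : ℂ) ≠ 0 ∧
      ‖z t‖ = 1 ∧
      HasDerivAt z
        ((Complex.I * ((Complex.im ((starRingEnd ℂ) v * z t) : ℝ) : ℂ) * z t) / (ℓ : ℂ)) t := by
  intro t
  have hβρ : ‖β‖ = ρ := by
    rw [hβ, hρ, norm_div, norm_neg, norm_mul, Complex.norm_two, norm_real, Real.norm_eq_abs,
      abs_of_pos hℓ]
  have hρ₀ : 0 < ρ := by rw [hρ]; exact div_pos (norm_pos_iff.mpr hv) (by positivity)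
  have hu : ‖β / ρ‖ = 1 := by
    rw [norm_div, norm_real, Real.norm_eq_abs, hβρ, abs_of_pos hρ₀, div_self hρ₀.ne']
  have hflow : z = mobiusFlow (β / ρ) ρ z₀ := by
    rw [hz]; unfold mobiusFlow; rw [map_div₀, conj_ofReal]
  have hD := mobiusFlow_denom_ne_zero hu hz₀ ρ t
  refine ⟨by simpa only [map_div₀, conj_ofReal] using hD, hflow ▸ norm_mobiusFlow hu hz₀ ρ t, ?_⟩
  rw [hflow, planimeter_field_eq_riccati hℓ.ne' v (norm_mobiusFlow hu hz₀ ρ t), ← hβ]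
  refine (hasDerivAt_mobiusFlow hu hD).congr_deriv ?_
  rw [map_div₀, conj_ofReal, div_mul_eq_mul_div, ← sub_div,
    mul_div_cancel₀ _ (ofReal_ne_zero.mpr hρ₀.ne')]
end

section
/- Let ℓ > 0 and t, θ₀ ∈ ℝ, and set D = cosh(t/ℓ) − sinh(t/ℓ)·cos θ₀. Then D > 0 and (cosh(t/(2ℓ))·e^{iθ₀} − sinh(t/(2ℓ))) / (−sinh(t/(2ℓ))·e^{iθ₀} + cosh(t/(2ℓ))) = [(cosh(t/ℓ)·cos θ₀ − sinh(t/ℓ)) + i·sin θ₀] / D. In particular, for θ₀ = π/2 this equals −tanh(t/ℓ) + i·sech(t/ℓ), so the path t ↦ t + ℓ·(−tanh(t/ℓ) + i·sech(t/ℓ)) of the chisel point is the standard tractrix. -/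
/-!
Write `a = cosh(t/2ℓ)`, `b = sinh(t/2ℓ)` and `z = e^{iθ₀}`. Multiplying numerator and denominator
of `(a z - b) / (-b z + a)` by the conjugate `-b z̄ + a` of the denominator, and using `z z̄ = 1`,
turns the denominator into `a² + b² - 2ab cos θ₀ = cosh(t/ℓ) - sinh(t/ℓ) cos θ₀` and the numerator
into `(a² + b²) cos θ₀ - 2ab + i (a² - b²) sin θ₀`; the double-angle formulas and `a² - b² = 1`
give the claimed form. The denominator is positive because `|sinh x| < cosh x`.
-/

open Complex

theorem Real.cosh_sub_sinh_mul_cos_pos (x θ : ℝ) : 0 < Real.cosh x - Real.sinh x * Real.cos θ := by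
  have : Real.sinh x * Real.cos θ < Real.cosh x :=
    calc Real.sinh x * Real.cos θ ≤ |Real.sinh x| * |Real.cos θ| := by
          rw [← abs_mul]; exact le_abs_self _
      _ ≤ |Real.sinh x| := mul_le_of_le_one_right (abs_nonneg _) (Real.abs_cos_le_one θ)
      _ = Real.sinh |x| := Real.abs_sinh x
      _ < Real.cosh |x| := Real.sinh_lt_cosh _
      _ = Real.cosh x := Real.cosh_abs x
  linarith

section MobiusUnitCircle

variable (a b θ : ℝ)

theorem mobius_denom_mul_conj :
    (-(b : ℂ) * exp (θ * I) + a) * (-(b : ℂ) * exp (-θ * I) + a)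
      = ((a ^ 2 + b ^ 2 - 2 * a * b * Real.cos θ : ℝ) : ℂ) := by
  have hprod : exp (θ * I) * exp (-θ * I) = 1 := by rw [← Complex.exp_add]; simp
  have hsum : exp (θ * I) + exp (-θ * I) = 2 * Real.cos θ := by
    rw [Complex.ofReal_cos, Complex.two_cos]
  push_cast [-Complex.ofReal_cos]
  linear_combination (b : ℂ) ^ 2 * hprod - (a : ℂ) * b * hsum

theorem mobius_numer_mul_conj :
    ((a : ℂ) * exp (θ * I) - b) * (-(b : ℂ) * exp (-θ * I) + a)
      = (((a ^ 2 + b ^ 2) * Real.cos θ - 2 * a * b : ℝ) : ℂ)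
          + I * (((a ^ 2 - b ^ 2) * Real.sin θ : ℝ) : ℂ) := by
  have hz : exp (θ * I) = Real.cos θ + Real.sin θ * I := by
    rw [Complex.exp_mul_I, Complex.ofReal_cos, Complex.ofReal_sin]
  have hz' : exp (-θ * I) = Real.cos θ - Real.sin θ * I := by
    rw [Complex.exp_mul_I, Complex.cos_neg, Complex.sin_neg, Complex.ofReal_cos,
      Complex.ofReal_sin]
    ring
  have hcs : (Real.cos θ : ℂ) ^ 2 + (Real.sin θ : ℂ) ^ 2 = 1 := by
    exact_mod_cast Real.cos_sq_add_sin_sq θ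
  rw [hz, hz']
  push_cast [-Complex.ofReal_cos, -Complex.ofReal_sin]
  linear_combination (-(a : ℂ) * b) * hcs + (a : ℂ) * b * (Real.sin θ : ℂ) ^ 2 * I_sq

end MobiusUnitCircle

theorem mobius_cosh_sinh_exp_mul_I (u θ : ℝ) :
    ((Real.cosh u : ℂ) * exp (θ * I) - Real.sinh u) / (-(Real.sinh u : ℂ) * exp (θ * I) + Real.cosh u)
      = (((Real.cosh (2 * u) * Real.cos θ - Real.sinh (2 * u) : ℝ) : ℂ)
          + I * ((Real.sin θ : ℝ) : ℂ))
        / ((Real.cosh (2 * u) - Real.sinh (2 * u) * Real.cos θ : ℝ) : ℂ) := by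
  have hcosh : Real.cosh u ^ 2 + Real.sinh u ^ 2 = Real.cosh (2 * u) := (Real.cosh_two_mul u).symm
  have hsinh : 2 * Real.cosh u * Real.sinh u = Real.sinh (2 * u) := by
    rw [Real.sinh_two_mul]; ring
  have hdenom : (-(Real.sinh u : ℂ) * exp (θ * I) + Real.cosh u)
      * (-(Real.sinh u : ℂ) * exp (-θ * I) + Real.cosh u)
      = ((Real.cosh (2 * u) - Real.sinh (2 * u) * Real.cos θ : ℝ) : ℂ) := by
    rw [mobius_denom_mul_conj, ← hcosh, ← hsinh]
  have hnumer : ((Real.cosh u : ℂ) * exp (θ * I) - Real.sinh u)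
      * (-(Real.sinh u : ℂ) * exp (-θ * I) + Real.cosh u)
      = ((Real.cosh (2 * u) * Real.cos θ - Real.sinh (2 * u) : ℝ) : ℂ)
          + I * ((Real.sin θ : ℝ) : ℂ) := by
    rw [mobius_numer_mul_conj, ← hcosh, ← hsinh, Real.cosh_sq_sub_sinh_sq, one_mul]
  have hpos := Real.cosh_sub_sinh_mul_cos_pos (2 * u) θ
  have hconj : -(Real.sinh u : ℂ) * exp (-θ * I) + Real.cosh u ≠ 0 := by
    refine right_ne_zero_of_mul (a := -(Real.sinh u : ℂ) * exp (θ * I) + Real.cosh u) ?_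
    rw [hdenom]
    exact_mod_cast hpos.ne'
  rw [← mul_div_mul_right _ _ hconj, hnumer, hdenom]

theorem mobius_action_straight_line_general
    (ℓ : ℝ) (t θ₀ : ℝ)
    (D : ℝ) (hD : D = Real.cosh (t / ℓ) - Real.sinh (t / ℓ) * Real.cos θ₀) :
    0 < D ∧
    ((Real.cosh (t / (2 * ℓ)) : ℂ) * Complex.exp (θ₀ * Complex.I)
        - (Real.sinh (t / (2 * ℓ)) : ℂ)) /
      (-(Real.sinh (t / (2 * ℓ)) : ℂ) * Complex.exp (θ₀ * Complex.I)
        + (Real.cosh (t / (2 * ℓ)) : ℂ))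
      = (((Real.cosh (t / ℓ) * Real.cos θ₀ - Real.sinh (t / ℓ) : ℝ) : ℂ)
          + Complex.I * ((Real.sin θ₀ : ℝ) : ℂ)) / (D : ℂ) ∧
    (θ₀ = Real.pi / 2 →
      ((Real.cosh (t / (2 * ℓ)) : ℂ) * Complex.exp (θ₀ * Complex.I)
          - (Real.sinh (t / (2 * ℓ)) : ℂ)) /
        (-(Real.sinh (t / (2 * ℓ)) : ℂ) * Complex.exp (θ₀ * Complex.I)
          + (Real.cosh (t / (2 * ℓ)) : ℂ))
        = -(Real.tanh (t / ℓ) : ℂ) + Complex.I * ((Real.cosh (t / ℓ))⁻¹ : ℝ)) := by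
  have hdouble : t / ℓ = 2 * (t / (2 * ℓ)) := by ring
  have hmobius := mobius_cosh_sinh_exp_mul_I (t / (2 * ℓ)) θ₀
  rw [← hdouble, ← hD] at hmobius
  refine ⟨hD ▸ Real.cosh_sub_sinh_mul_cos_pos _ _, hmobius, fun hθ₀ => ?_⟩
  have hcosh : (Real.cosh (t / ℓ) : ℂ) ≠ 0 := by exact_mod_cast (Real.cosh_pos _).ne'
  rw [hmobius, hD, hθ₀, Real.cos_pi_div_two, Real.sin_pi_div_two, Real.tanh_eq_sinh_div_cosh]
  push_cast
  field_simp
  ring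

/-- The Möbius action of `[[cosh(t/2ℓ), −sinh(t/2ℓ)], [−sinh(t/2ℓ), cosh(t/2ℓ)]]`
on `e^{iθ₀}` in explicit form; for `θ₀ = π/2` it gives the standard tractrix
direction `−tanh(t/ℓ) + i sech(t/ℓ)`. -/
theorem mobius_action_straight_line
    (ℓ : ℝ) (hℓ : 0 < ℓ) (t θ₀ : ℝ)
    (D : ℝ) (hD : D = Real.cosh (t / ℓ) - Real.sinh (t / ℓ) * Real.cos θ₀) :
    0 < D ∧
    ((Real.cosh (t / (2 * ℓ)) : ℂ) * Complex.exp (θ₀ * Complex.I)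
        - (Real.sinh (t / (2 * ℓ)) : ℂ)) /
      (-(Real.sinh (t / (2 * ℓ)) : ℂ) * Complex.exp (θ₀ * Complex.I)
        + (Real.cosh (t / (2 * ℓ)) : ℂ))
      = (((Real.cosh (t / ℓ) * Real.cos θ₀ - Real.sinh (t / ℓ) : ℝ) : ℂ)
          + Complex.I * ((Real.sin θ₀ : ℝ) : ℂ)) / (D : ℂ) ∧
    (θ₀ = Real.pi / 2 →
      ((Real.cosh (t / (2 * ℓ)) : ℂ) * Complex.exp (θ₀ * Complex.I)
          - (Real.sinh (t / (2 * ℓ)) : ℂ)) /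
        (-(Real.sinh (t / (2 * ℓ)) : ℂ) * Complex.exp (θ₀ * Complex.I)
          + (Real.cosh (t / (2 * ℓ)) : ℂ))
        = -(Real.tanh (t / ℓ) : ℂ) + Complex.I * ((Real.cosh (t / ℓ))⁻¹ : ℝ)) :=
  mobius_action_straight_line_general ℓ t θ₀ D hD
end

section
/- Let a, c be positive reals and b, d ∈ ℂ with a² − |b|² = 1 and c² − |d|² = 1. Set M_X = [[a, b], [conj(b), a]], M_Y = [[c, d], [conj(d), c]], M_X⁻¹ = [[a, −b], [−conj(b), a]], M_Y⁻¹ = [[c, −d], [−conj(d), c]] (2×2 complex matrices), and let H = M_Y⁻¹ · M_X⁻¹ · M_Y · M_X. Then trace(H) = 2 − 4·(Im(conj(b)·d))². -/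
/-!
Since `a² − |b|² = 1`, the matrix `MXinv` is the adjugate, i.e. the inverse, of `MX` (likewise for
`MY`), so `H` is a commutator in `SL₂(ℂ)`. Fricke's identity expresses its trace through
`tr MX = 2a`, `tr MY = 2c` and `tr (MX MY) = 2(ac + Re(b̄d))`; eliminating `a²` and `c²` with the
determinant conditions and using `|b|²|d|² = Re(b̄d)² + Im(b̄d)²` leaves `2 − 4 Im(b̄d)²`.
-/

open Matrix ComplexConjugate

namespace Matrix

variable {R : Type*} [CommRing R]

/-- Fricke's trace identity for commutators in `GL₂`, in a form that needs no inverses. -/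
theorem trace_adjugate_mul_adjugate_mul_mul_fin_two (A B : Matrix (Fin 2) (Fin 2) R) :
    trace (adjugate B * adjugate A * B * A) =
      det A * trace B ^ 2 + det B * trace A ^ 2 + trace (A * B) ^ 2
        - trace A * trace B * trace (A * B) - 2 * det A * det B := by
  rw [eta_fin_two A, eta_fin_two B]
  simp only [adjugate_fin_two_of, mul_fin_two, trace_fin_two_of, det_fin_two_of]
  ring

end Matrix

def su11Matrix (α : ℝ) (β : ℂ) : Matrix (Fin 2) (Fin 2) ℂ := !![(α : ℂ), β; conj β, (α : ℂ)]

theorem adjugate_su11Matrix (α : ℝ) (β : ℂ) :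
    adjugate (su11Matrix α β) = !![(α : ℂ), -β; -conj β, (α : ℂ)] :=
  adjugate_fin_two_of _ _ _ _

theorem det_su11Matrix (α : ℝ) (β : ℂ) : det (su11Matrix α β) = ((α ^ 2 - ‖β‖ ^ 2 : ℝ) : ℂ) := by
  rw [su11Matrix, det_fin_two_of, mul_comm β, Complex.conj_mul']
  push_cast
  ring

theorem trace_su11Matrix (α : ℝ) (β : ℂ) : trace (su11Matrix α β) = ((2 * α : ℝ) : ℂ) := by
  rw [su11Matrix, trace_fin_two_of]
  push_cast
  ring

theorem trace_su11Matrix_mul_su11Matrix (α γ : ℝ) (β δ : ℂ) :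
    trace (su11Matrix α β * su11Matrix γ δ) = ((2 * (α * γ + (conj β * δ).re) : ℝ) : ℂ) := by
  have hsum : β * conj δ + conj β * δ = ((2 * (conj β * δ).re : ℝ) : ℂ) := by
    rw [Complex.ofReal_mul, Complex.re_eq_add_conj]
    simp only [map_mul, Complex.conj_conj]
    push_cast
    ring
  rw [su11Matrix, su11Matrix, mul_fin_two, trace_fin_two_of]
  push_cast at hsum ⊢
  linear_combination hsum

theorem re_sq_add_im_sq_conj_mul (β δ : ℂ) :
    (conj β * δ).re ^ 2 + (conj β * δ).im ^ 2 = ‖β‖ ^ 2 * ‖δ‖ ^ 2 := by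
  rw [← mul_pow, ← Complex.norm_conj β, ← norm_mul, Complex.sq_norm, Complex.normSq_apply]
  ring

theorem parallelogram_holonomy_trace_general
    (a c : ℝ) (b d : ℂ)
    (hab : a ^ 2 - ‖b‖ ^ 2 = 1)
    (hcd : c ^ 2 - ‖d‖ ^ 2 = 1)
    (MX MY MXinv MYinv H : Matrix (Fin 2) (Fin 2) ℂ)
    (hMX : MX = !![(a : ℂ), b; (starRingEnd ℂ) b, (a : ℂ)])
    (hMY : MY = !![(c : ℂ), d; (starRingEnd ℂ) d, (c : ℂ)])
    (hMXinv : MXinv = !![(a : ℂ), -b; -(starRingEnd ℂ) b, (a : ℂ)])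
    (hMYinv : MYinv = !![(c : ℂ), -d; -(starRingEnd ℂ) d, (c : ℂ)])
    (hH : H = MYinv * MXinv * MY * MX) :
    H.trace = 2 - 4 * ((Complex.im ((starRingEnd ℂ) b * d) : ℝ) : ℂ) ^ 2 := by
  rw [← su11Matrix] at hMX hMY
  rw [← adjugate_su11Matrix] at hMXinv hMYinv
  subst hMX hMY hMXinv hMYinv hH
  rw [trace_adjugate_mul_adjugate_mul_mul_fin_two, det_su11Matrix, det_su11Matrix,
    trace_su11Matrix, trace_su11Matrix, trace_su11Matrix_mul_su11Matrix]
  set re := (conj b * d).re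
  set im := (conj b * d).im
  have hreal : (a ^ 2 - ‖b‖ ^ 2) * (2 * c) ^ 2 + (c ^ 2 - ‖d‖ ^ 2) * (2 * a) ^ 2
      + (2 * (a * c + re)) ^ 2 - 2 * a * (2 * c) * (2 * (a * c + re))
      - 2 * (a ^ 2 - ‖b‖ ^ 2) * (c ^ 2 - ‖d‖ ^ 2) = 2 - 4 * im ^ 2 := by
    linear_combination 4 * re_sq_add_im_sq_conj_mul b d + 2 * (c ^ 2 - ‖d‖ ^ 2) * hab + 2 * hcd
  exact_mod_cast hreal

/-- Trace of the parallelogram holonomy `H = e^{−Y}e^{−X}e^{Y}e^{X}` in SU(1,1):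
`tr H = 2 − 4 Im(conj b · d)²`. -/
theorem parallelogram_holonomy_trace
    (a c : ℝ) (ha : 0 < a) (hc : 0 < c) (b d : ℂ)
    (hab : a ^ 2 - ‖b‖ ^ 2 = 1)
    (hcd : c ^ 2 - ‖d‖ ^ 2 = 1)
    (MX MY MXinv MYinv H : Matrix (Fin 2) (Fin 2) ℂ)
    (hMX : MX = !![(a : ℂ), b; (starRingEnd ℂ) b, (a : ℂ)])
    (hMY : MY = !![(c : ℂ), d; (starRingEnd ℂ) d, (c : ℂ)])
    (hMXinv : MXinv = !![(a : ℂ), -b; -(starRingEnd ℂ) b, (a : ℂ)])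
    (hMYinv : MYinv = !![(c : ℂ), -d; -(starRingEnd ℂ) d, (c : ℂ)])
    (hH : H = MYinv * MXinv * MY * MX) :
    H.trace = 2 - 4 * ((Complex.im ((starRingEnd ℂ) b * d) : ℝ) : ℂ) ^ 2 :=
  parallelogram_holonomy_trace_general a c b d hab hcd MX MY MXinv MYinv H hMX hMY hMXinv hMYinv hH
end

section
/- Let a, c be positive reals and b, d ∈ ℂ with a² − |b|² = 1 and c² − |d|² = 1. Set M_X = [[a, b], [conj(b), a]], M_Y = [[c, d], [conj(d), c]], M_X⁻¹ = [[a, −b], [−conj(b), a]], M_Y⁻¹ = [[c, −d], [−conj(d), c]], and H = M_Y⁻¹ · M_X⁻¹ · M_Y · M_X. Then H = I + 2·Im(conj(b)·d)·[[i, 0], [0, −i]]·(M_Y · M_X), where I is the 2×2 identity matrix. -/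
open Matrix

/-!
Since `X⁻¹Y⁻¹ · YX = 1`, we have `H - 1 = (Y⁻¹X⁻¹ - X⁻¹Y⁻¹) · YX`, so only the commutator
of `e^{-Y}` and `e^{-X}` has to be computed. Each is a real multiple of the identity plus an
off-diagonal matrix `[[0, β], [conj β, 0]]`; the scalar parts commute, and two such off-diagonal
matrices multiply to diagonal ones, whose difference is `2 Im(conj b · d) · [[i, 0], [0, -i]]`.
-/

theorem mul_mul_mul_eq_one_add_lie_mul {R : Type*} [Ring R] {x x' y y' : R}
    (hx : x' * x = 1) (hy : y' * y = 1) :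
    y' * x' * y * x = 1 + ⁅y', x'⁆ * (y * x) := by
  have hinv : x' * y' * (y * x) = 1 := by
    rw [mul_assoc, ← mul_assoc y', hy, one_mul, hx]
  rw [Ring.lie_def, sub_mul, ← hinv]
  noncomm_ring

namespace SU11

/-- The matrix `e^X` of a translation of the tracer point. -/
def boost (a : ℝ) (b : ℂ) : Matrix (Fin 2) (Fin 2) ℂ :=
  !![(a : ℂ), b; starRingEnd ℂ b, (a : ℂ)]

theorem boost_neg_mul_boost {a : ℝ} {b : ℂ} (h : a ^ 2 - ‖b‖ ^ 2 = 1) :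
    boost a (-b) * boost a b = 1 := by
  have hb : b * starRingEnd ℂ b = (a : ℂ) ^ 2 - 1 := by
    rw [Complex.mul_conj, ← Complex.sq_norm]
    exact_mod_cast (by linarith : ‖b‖ ^ 2 = a ^ 2 - 1)
  rw [boost, boost, mul_fin_two, one_fin_two]
  ext i j
  fin_cases i <;> fin_cases j <;>
    simp only [Fin.zero_eta, Fin.mk_one, Fin.isValue, of_apply, cons_val', cons_val_zero,
      cons_val_one, cons_val_fin_one, map_neg, neg_mul]
  · linear_combination -hb
  · ring
  · ring
  · linear_combination -hb

theorem lie_boost_boost (a c : ℝ) (e f : ℂ) :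
    ⁅boost c e, boost a f⁆ =
      ((2 * (starRingEnd ℂ f * e).im : ℝ) : ℂ) • !![Complex.I, 0; 0, -Complex.I] := by
  have hdiag : starRingEnd ℂ f * e - f * starRingEnd ℂ e
      = ((2 * (starRingEnd ℂ f * e).im : ℝ) : ℂ) * Complex.I := by
    simpa only [map_mul, Complex.conj_conj] using Complex.sub_conj (starRingEnd ℂ f * e)
  generalize ((2 * (starRingEnd ℂ f * e).im : ℝ) : ℂ) = r at hdiag ⊢
  rw [Ring.lie_def, boost, boost, mul_fin_two, mul_fin_two]
  ext i j
  fin_cases i <;> fin_cases j <;>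
    simp only [Fin.zero_eta, Fin.mk_one, Fin.isValue, Matrix.sub_apply, Matrix.smul_apply,
      of_apply, cons_val', cons_val_zero, cons_val_one, cons_val_fin_one, smul_eq_mul]
  · linear_combination hdiag
  · ring
  · ring
  · linear_combination -hdiag

end SU11

open SU11 in
theorem parallelogram_holonomy_formula_general
    (a c : ℝ) (b d : ℂ)
    (hab : a ^ 2 - ‖b‖ ^ 2 = 1)
    (hcd : c ^ 2 - ‖d‖ ^ 2 = 1)
    (MX MY MXinv MYinv H : Matrix (Fin 2) (Fin 2) ℂ)
    (hMX : MX = !![(a : ℂ), b; (starRingEnd ℂ) b, (a : ℂ)])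
    (hMY : MY = !![(c : ℂ), d; (starRingEnd ℂ) d, (c : ℂ)])
    (hMXinv : MXinv = !![(a : ℂ), -b; -(starRingEnd ℂ) b, (a : ℂ)])
    (hMYinv : MYinv = !![(c : ℂ), -d; -(starRingEnd ℂ) d, (c : ℂ)])
    (hH : H = MYinv * MXinv * MY * MX) :
    H = 1 + ((2 * Complex.im ((starRingEnd ℂ) b * d) : ℝ) : ℂ)
          • (!![Complex.I, 0; 0, -Complex.I] * (MY * MX)) := by
  have hX : MX = boost a b := hMX
  have hY : MY = boost c d := hMY
  have hXinv : MXinv = boost a (-b) := by rw [hMXinv, boost, map_neg]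
  have hYinv : MYinv = boost c (-d) := by rw [hMYinv, boost, map_neg]
  have hcomm : ⁅MYinv, MXinv⁆ = ((2 * Complex.im ((starRingEnd ℂ) b * d) : ℝ) : ℂ)
      • !![Complex.I, 0; 0, -Complex.I] := by
    rw [hXinv, hYinv, lie_boost_boost, map_neg, neg_mul_neg]
  rw [hH, mul_mul_mul_eq_one_add_lie_mul (by rw [hX, hXinv, boost_neg_mul_boost hab])
    (by rw [hY, hYinv, boost_neg_mul_boost hcd]), hcomm, smul_mul_assoc]

/-- The parallelogram holonomy `H = e^{−Y}e^{−X}e^{Y}e^{X}` satisfies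
`H = I + 2 Im(conj b · d) · [[i,0],[0,−i]] · (e^Y e^X)`. -/
theorem parallelogram_holonomy_formula
    (a c : ℝ) (ha : 0 < a) (hc : 0 < c) (b d : ℂ)
    (hab : a ^ 2 - ‖b‖ ^ 2 = 1)
    (hcd : c ^ 2 - ‖d‖ ^ 2 = 1)
    (MX MY MXinv MYinv H : Matrix (Fin 2) (Fin 2) ℂ)
    (hMX : MX = !![(a : ℂ), b; (starRingEnd ℂ) b, (a : ℂ)])
    (hMY : MY = !![(c : ℂ), d; (starRingEnd ℂ) d, (c : ℂ)])
    (hMXinv : MXinv = !![(a : ℂ), -b; -(starRingEnd ℂ) b, (a : ℂ)])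
    (hMYinv : MYinv = !![(c : ℂ), -d; -(starRingEnd ℂ) d, (c : ℂ)])
    (hH : H = MYinv * MXinv * MY * MX) :
    H = 1 + ((2 * Complex.im ((starRingEnd ℂ) b * d) : ℝ) : ℂ)
          • (!![Complex.I, 0; 0, -Complex.I] * (MY * MX)) :=
  parallelogram_holonomy_formula_general a c b d hab hcd MX MY MXinv MYinv H hMX hMY hMXinv hMYinv
    hH
end

section
/- Let x, y > 0 and s ∈ (0, 1] with x·y·s ≥ π/4. Then sinh(x)·sinh(y)·s ≥ (cosh(√π) − 1)/2, with equality when x = y = √π/2 and s = 1; moreover (cosh(√π) − 1)/2 > 1. Consequently, if x·y·s ≥ π/4 then sinh(x)·sinh(y)·s > 1. -/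
/-!
Write `2 sinh x sinh y = cosh (x + y) - cosh (x - y)` and `G t = cosh √t`. Since `G` is convex
(its derivative is `sinh r / (2 r)` at `r = √t`, increasing because `sinh` is convex with
`sinh 0 = 0`), its increments grow, so with `(x + y)² = (x - y)² + 4xy` we get
`2 sinh x sinh y ≥ G (4xy) - G 0 ≥ G (π / s) - G 0`. Convexity once more gives
`s (G (π / s) - G 0) ≥ G π - G 0`, which is the bound. The constant exceeds `1` because
`cosh √π > 3`, already for the partial sum `1 + π/2 + π²/24 + π³/720` of its series.
-/

open Real Set

namespace ConvexOn

variable {f : ℝ → ℝ}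

lemma map_mul_sub_map_zero_le (hf : ConvexOn ℝ (Ici 0) f) {a t : ℝ} (ht : 0 ≤ t)
    (ha₀ : 0 ≤ a) (ha₁ : a ≤ 1) : f (a * t) - f 0 ≤ a * (f t - f 0) := by
  have h := hf.2 (mem_Ici.2 ht) (mem_Ici.2 le_rfl) ha₀ (sub_nonneg.2 ha₁) (add_sub_cancel a 1)
  simp only [smul_eq_mul, mul_zero, add_zero] at h
  linarith

lemma map_add_map_le_map_add_add_map_zero (hf : ConvexOn ℝ (Ici 0) f) {a b : ℝ} (ha : 0 ≤ a)
    (hb : 0 ≤ b) : f a + f b ≤ f (a + b) + f 0 := by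
  rcases (add_nonneg ha hb).eq_or_lt with hab | hab
  · obtain rfl : a = 0 := by linarith
    obtain rfl : b = 0 := by linarith
    simp
  have hpart : ∀ c, 0 ≤ c → c ≤ a + b → f c - f 0 ≤ c / (a + b) * (f (a + b) - f 0) := by
    intro c hc hcab
    simpa only [div_mul_cancel₀ c hab.ne'] using
      hf.map_mul_sub_map_zero_le hab.le (div_nonneg hc hab.le) ((div_le_one hab).2 hcab)
  have h := add_le_add (hpart a ha (by linarith)) (hpart b hb (by linarith))
  rw [← add_mul, ← add_div, div_self hab.ne', one_mul] at h
  linarith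

end ConvexOn

namespace Real

lemma convexOn_sinh : ConvexOn ℝ (Ici 0) sinh := by
  refine MonotoneOn.convexOn_of_deriv (convex_Ici 0) continuous_sinh.continuousOn
    differentiable_sinh.differentiableOn ?_
  rw [deriv_sinh]
  exact cosh_strictMonoOn.monotoneOn.mono interior_subset

lemma monotoneOn_sinh_div_self : MonotoneOn (fun r ↦ sinh r / r) (Ioi 0) := by
  intro a (ha : 0 < a) b (hb : 0 < b) hab
  simpa using convexOn_sinh.secant_mono (mem_Ici.2 le_rfl) (mem_Ici.2 ha.le) (mem_Ici.2 hb.le)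
    ha.ne' hb.ne' hab

lemma convexOn_cosh_sqrt : ConvexOn ℝ (Ici 0) (fun t ↦ cosh √t) := by
  have hderiv : ∀ t, 0 < t → HasDerivAt (fun t ↦ cosh √t) (sinh √t / √t / 2) t := by
    intro t ht
    convert (hasDerivAt_sqrt ht.ne').cosh using 1
    field_simp
  refine MonotoneOn.convexOn_of_deriv (convex_Ici 0)
    (continuous_cosh.comp continuous_sqrt).continuousOn ?_ ?_ <;> rw [interior_Ici]
  · exact fun t ht ↦ (hderiv t ht).differentiableAt.differentiableWithinAt
  · intro a (ha : 0 < a) b (hb : 0 < b) hab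
    rw [(hderiv a ha).deriv, (hderiv b hb).deriv]
    exact div_le_div_of_nonneg_right (monotoneOn_sinh_div_self (sqrt_pos.2 ha) (sqrt_pos.2 hb) (sqrt_le_sqrt hab)) two_pos.le

lemma cosh_sqrt_four_mul_sub_one_le {x y : ℝ} (hxy : 0 ≤ x * y) :
    cosh √(4 * (x * y)) - 1 ≤ 2 * (sinh x * sinh y) := by
  have h := convexOn_cosh_sqrt.map_add_map_le_map_add_add_map_zero (sq_nonneg (x - y))
    (by positivity : 0 ≤ 4 * (x * y))
  rw [show (x - y) ^ 2 + 4 * (x * y) = (x + y) ^ 2 by ring, sqrt_sq_eq_abs, sqrt_sq_eq_abs,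
    cosh_abs, cosh_abs, sqrt_zero, cosh_zero] at h
  linarith [cosh_add x y, cosh_sub x y]

lemma cosh_sqrt_sub_one_div_two_le_sinh_mul_sinh_mul {c x y s : ℝ} (hc : 0 ≤ c) (hs₀ : 0 < s)
    (hs₁ : s ≤ 1) (h : c / 4 ≤ x * y * s) : (cosh √c - 1) / 2 ≤ sinh x * sinh y * s := by
  have hxy : c / s ≤ 4 * (x * y) := by
    rw [div_le_iff₀ hs₀]
    linarith
  have hcs : 0 ≤ c / s := div_nonneg hc hs₀.le
  have hscale := convexOn_cosh_sqrt.map_mul_sub_map_zero_le hcs hs₀.le hs₁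
  rw [mul_div_cancel₀ c hs₀.ne', sqrt_zero, cosh_zero] at hscale
  have hmono : cosh √(c / s) ≤ cosh √(4 * (x * y)) := by
    rw [cosh_le_cosh, abs_of_nonneg (sqrt_nonneg _), abs_of_nonneg (sqrt_nonneg _)]
    exact sqrt_le_sqrt hxy
  have hprod : cosh √(4 * (x * y)) - 1 ≤ 2 * (sinh x * sinh y) :=
    cosh_sqrt_four_mul_sub_one_le (by linarith)
  calc (cosh √c - 1) / 2 ≤ s * (cosh √(c / s) - 1) / 2 := by linarith
    _ ≤ s * (cosh √(4 * (x * y)) - 1) / 2 := by gcongr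
    _ ≤ s * (2 * (sinh x * sinh y)) / 2 := by gcongr
    _ = sinh x * sinh y * s := by ring

lemma three_lt_cosh_sqrt_pi : 3 < cosh √π := by
  have hpartial := sum_le_hasSum (Finset.range 4) (fun n _ ↦ by positivity) (hasSum_cosh √π)
  simp only [pow_mul, sq_sqrt pi_pos.le] at hpartial
  norm_num [Finset.sum_range_succ, Nat.factorial] at hpartial
  nlinarith [pi_gt_d2]

end Real

theorem menzin_parallelogram_inequality_general
    (x y s : ℝ) (hs : s ∈ Set.Ioc (0:ℝ) 1)
    (harea : x * y * s ≥ Real.pi / 4) :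
    Real.sinh x * Real.sinh y * s ≥ (Real.cosh (Real.sqrt Real.pi) - 1) / 2 ∧
    (x = Real.sqrt Real.pi / 2 ∧ y = Real.sqrt Real.pi / 2 ∧ s = 1 →
      Real.sinh x * Real.sinh y * s = (Real.cosh (Real.sqrt Real.pi) - 1) / 2) ∧
    (Real.cosh (Real.sqrt Real.pi) - 1) / 2 > 1 ∧
    Real.sinh x * Real.sinh y * s > 1 := by
  have hbound := cosh_sqrt_sub_one_div_two_le_sinh_mul_sinh_mul pi_pos.le hs.1 hs.2 harea
  have hcosh := three_lt_cosh_sqrt_pi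
  refine ⟨hbound, ?_, by linarith, by linarith⟩
  rintro ⟨rfl, rfl, rfl⟩
  have hdouble := cosh_two_mul (√π / 2)
  rw [mul_div_cancel₀ _ two_ne_zero] at hdouble
  nlinarith [cosh_sq (√π / 2)]

/-- The optimization at the heart of Menzin's conjecture for parallelograms:
if `x y s ≥ π/4` with `x, y > 0` and `s ∈ (0,1]`, then
`sinh x sinh y s ≥ (cosh √π − 1)/2 > 1`, with equality at
`x = y = √π/2`, `s = 1`. -/
theorem menzin_parallelogram_inequality
    (x y s : ℝ) (hx : 0 < x) (hy : 0 < y) (hs : s ∈ Set.Ioc (0:ℝ) 1)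
    (harea : x * y * s ≥ Real.pi / 4) :
    Real.sinh x * Real.sinh y * s ≥ (Real.cosh (Real.sqrt Real.pi) - 1) / 2 ∧
    (x = Real.sqrt Real.pi / 2 ∧ y = Real.sqrt Real.pi / 2 ∧ s = 1 →
      Real.sinh x * Real.sinh y * s = (Real.cosh (Real.sqrt Real.pi) - 1) / 2) ∧
    (Real.cosh (Real.sqrt Real.pi) - 1) / 2 > 1 ∧
    Real.sinh x * Real.sinh y * s > 1 :=
  menzin_parallelogram_inequality_general x y s hs harea
end

section
/- Let a, c be positive reals and b, d ∈ ℂ with a² − |b|² = 1, c² − |d|² = 1, and m := Im(conj(b)·d) > 1. Then: (i) ad + bc ≠ 0 and ac + Re(conj(b)·d) > 0; (ii) the two points z_± := −(ad + bc)·(ac + Re(conj(b)·d) ± i·√(m² − 1)) / |ad + bc|² satisfy |z_±| = 1; (iii) z_± solve the equation ((ac + conj(b)d)·z + (ad + bc)) = −z·((a·conj(d) + conj(b)c)·z + (ac + b·conj(d))), i.e. the Möbius transformation of M_Y·M_X maps z_± to −z_±; and (iv) z_± are fixed points of the Möbius transformation of H = M_Y⁻¹·M_X⁻¹·M_Y·M_X,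 i.e. (H₁₁ z_± + H₁₂)/(H₂₁ z_± + H₂₂) = z_±. Here M_X = [[a, b], [conj(b), a]], M_Y = [[c, d], [conj(d), c]], M_X⁻¹ = [[a, −b], [−conj(b), a]], M_Y⁻¹ = [[c, −d], [−conj(d), c]]. -/
/-!
Put `p = ac + conj b d` and `u = ad + bc`. Then `e^Y e^X = !![p, u; conj u, conj p]` has
determinant `‖p‖² - ‖u‖² = 1`, so `‖u‖² = (re p)² + t²` with `t = √(m² - 1)`, and `z_±` are the
roots `-u (re p ± i t) / ‖u‖²` of `conj u z² + 2 (re p) z + u = 0`. They lie on the unit circle,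
and the quadratic equation says exactly that `e^Y e^X` maps `z_±` to `-z_±`.

With `J = diag(1, -1)`, whose Möbius map is `z ↦ -z`, we have `e^{-X} = J e^X J`, hence
`H = (J e^Y e^X)²`. So `(z_±, 1)` is an eigenvector of `J e^Y e^X`, hence of `H`, with an eigenvalue
that is non-zero because `H` is invertible; this is what makes `z_±` a fixed point of `H`.
-/

open Matrix

open Complex ComplexConjugate

section Reflection

variable {R : Type*} [CommRing R]

def reflection : Matrix (Fin 2) (Fin 2) R := !![1, 0; 0, -1]

theorem reflection_mul_reflection : (reflection : Matrix (Fin 2) (Fin 2) R) * reflection = 1 := by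
  ext i j; fin_cases i <;> fin_cases j <;> simp [reflection]

theorem det_reflection : (reflection : Matrix (Fin 2) (Fin 2) R).det = -1 := by
  simp [reflection, det_fin_two_of]

theorem of_neg_offDiag_eq_reflection_conj (x y z w : R) :
    !![x, -y; -z, w] = reflection * !![x, y; z, w] * reflection := by
  ext i j; fin_cases i <;> fin_cases j <;> simp [reflection]

theorem reflection_conj_mul_reflection_conj_mul_mul (X Y : Matrix (Fin 2) (Fin 2) R) :
    reflection * Y * reflection * (reflection * X * reflection) * Y * X
      = reflection * (Y * X) * (reflection * (Y * X)) := by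
  calc _ = reflection * Y * (reflection * reflection) * X * (reflection * (Y * X)) := by
        simp only [Matrix.mul_assoc]
    _ = _ := by rw [reflection_mul_reflection, Matrix.mul_one]; simp only [Matrix.mul_assoc]

theorem reflection_mul_mulVec_eq_smul (A : Matrix (Fin 2) (Fin 2) R) {z : R}
    (h : A 0 0 * z + A 0 1 = -z * (A 1 0 * z + A 1 1)) :
    (reflection * A) *ᵥ ![z, 1] = (-(A 1 0 * z + A 1 1)) • ![z, 1] := by
  ext i; fin_cases i
  · simp [reflection, mulVec, dotProduct, Fin.sum_univ_two, Matrix.mul_apply, h]; ring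
  · simp [reflection, mulVec, dotProduct, Fin.sum_univ_two, Matrix.mul_apply]

end Reflection

section Mobius

variable {K : Type*} [Field K]

def mobius (A : Matrix (Fin 2) (Fin 2) K) (z : K) : K := (A 0 0 * z + A 0 1) / (A 1 0 * z + A 1 1)

theorem mul_self_mulVec_eq_sq_smul {n : Type*} [Fintype n] {A : Matrix n n K} {v : n → K}
    {μ : K} (h : A *ᵥ v = μ • v) : (A * A) *ᵥ v = μ ^ 2 • v := by
  rw [← mulVec_mulVec, h, mulVec_smul, h, smul_smul, sq]

theorem mobius_eq_self_of_mulVec_eq_smul {A : Matrix (Fin 2) (Fin 2) K} (hA : A.det ≠ 0)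
    {z μ : K} (h : A *ᵥ ![z, 1] = μ • ![z, 1]) : mobius A z = z := by
  have h0 : A 0 0 * z + A 0 1 = μ * z := by
    simpa [mulVec, dotProduct, Fin.sum_univ_two] using congrFun h 0
  have h1 : A 1 0 * z + A 1 1 = μ := by
    simpa [mulVec, dotProduct, Fin.sum_univ_two] using congrFun h 1
  have hμ : μ ≠ 0 := by
    rintro rfl
    have := eq_zero_of_mulVec_eq_zero hA (v := ![z, 1]) (by rw [h, zero_smul])
    simpa using congrFun this 1
  rw [mobius, h0, h1, mul_div_cancel_left₀ z hμ]

theorem mobius_holonomy_eq_self {X Y : Matrix (Fin 2) (Fin 2) K} (hdet : (Y * X).det ≠ 0)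
    {z : K} (h : (Y * X) 0 0 * z + (Y * X) 0 1 = -z * ((Y * X) 1 0 * z + (Y * X) 1 1)) :
    mobius (reflection * Y * reflection * (reflection * X * reflection) * Y * X) z = z := by
  rw [reflection_conj_mul_reflection_conj_mul_mul]
  refine mobius_eq_self_of_mulVec_eq_smul ?_
    (mul_self_mulVec_eq_sq_smul (reflection_mul_mulVec_eq_smul _ h))
  simpa [det_mul, det_reflection] using hdet

end Mobius

section SU11

variable {p u : ℂ}

def su11 (p u : ℂ) : Matrix (Fin 2) (Fin 2) ℂ := !![p, u; conj u, conj p]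

theorem of_ofReal_eq_su11 (a : ℝ) (b : ℂ) : !![(a : ℂ), b; conj b, (a : ℂ)] = su11 a b := by
  rw [su11, conj_ofReal]

theorem su11_mul_su11 (p u p' u' : ℂ) :
    su11 p u * su11 p' u' = su11 (p * p' + u * conj u') (p * u' + u * conj p') := by
  ext i j; fin_cases i <;> fin_cases j <;> simp [su11, Matrix.mul_apply] <;> ring

theorem det_su11 (p u : ℂ) : (su11 p u).det = ((‖p‖ ^ 2 - ‖u‖ ^ 2 : ℝ) : ℂ) := by
  rw [su11, det_fin_two_of, mul_conj', mul_conj']; push_cast; ring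

theorem det_of_ofReal (a : ℝ) (b : ℂ) :
    !![(a : ℂ), b; conj b, (a : ℂ)].det = ((a ^ 2 - ‖b‖ ^ 2 : ℝ) : ℂ) := by
  rw [of_ofReal_eq_su11, det_su11, norm_real, Real.norm_eq_abs, sq_abs]

theorem mul_add_eq_neg_mul_of_conj_mul_sq_add {z : ℂ}
    (h : conj u * z ^ 2 + 2 * p.re * z + u = 0) : p * z + u = -z * (conj u * z + conj p) := by
  have hp := add_conj p
  push_cast at hp
  linear_combination h + z * hp

theorem ne_zero_of_norm_sq_sub_norm_sq_eq_one (hpu : ‖p‖ ^ 2 - ‖u‖ ^ 2 = 1) (him : 1 < p.im) :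
    u ≠ 0 := by
  rintro rfl
  rw [Complex.sq_norm, normSq_apply, norm_zero] at hpu
  nlinarith

theorem re_sq_add_sq_eq_norm_sq (hpu : ‖p‖ ^ 2 - ‖u‖ ^ 2 = 1) {t : ℝ}
    (ht : t ^ 2 = p.im ^ 2 - 1) :
    p.re ^ 2 + t ^ 2 = ‖u‖ ^ 2 := by
  rw [Complex.sq_norm, normSq_apply] at hpu
  linarith

end SU11

noncomputable def circleRoot (u : ℂ) (s t : ℝ) : ℂ := -u * (s + I * t) / (‖u‖ : ℂ) ^ 2

section CircleRoot

variable {u : ℂ} {s t : ℝ}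

theorem norm_circleRoot (hu : u ≠ 0) (h : s ^ 2 + t ^ 2 = ‖u‖ ^ 2) :
    ‖circleRoot u s t‖ = 1 := by
  have hw : ‖(s : ℂ) + I * t‖ = ‖u‖ := by
    rw [mul_comm, norm_add_mul_I, h, Real.sqrt_sq (norm_nonneg u)]
  have hu' : ‖u‖ ≠ 0 := norm_ne_zero_iff.mpr hu
  rw [circleRoot, norm_div, norm_mul, norm_neg, hw, norm_pow, norm_real,
    Real.norm_of_nonneg (norm_nonneg u)]
  field_simp

theorem conj_mul_circleRoot_sq_add (hu : u ≠ 0) (h : s ^ 2 + t ^ 2 = ‖u‖ ^ 2) :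
    conj u * circleRoot u s t ^ 2 + 2 * s * circleRoot u s t + u = 0 := by
  have hN : (‖u‖ : ℂ) ^ 2 = s ^ 2 + t ^ 2 := by exact_mod_cast h.symm
  have hu' : (‖u‖ : ℂ) ≠ 0 := by exact_mod_cast norm_ne_zero_iff.mpr hu
  rw [circleRoot]
  field_simp
  -- `w = s + I t` is a root of `w² - 2 s w + s² + t²`, and `conj u * u = ‖u‖²`
  linear_combination (u * (s + I * t) ^ 2) * conj_mul' u + u * (‖u‖ : ℂ) ^ 2 * hN
    + u * (‖u‖ : ℂ) ^ 2 * t ^ 2 * I_sq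

theorem mul_circleRoot_add_eq_neg_mul {p : ℂ} (hu : u ≠ 0)
    (h : p.re ^ 2 + t ^ 2 = ‖u‖ ^ 2) :
    p * circleRoot u p.re t + u
      = -circleRoot u p.re t * (conj u * circleRoot u p.re t + conj p) :=
  mul_add_eq_neg_mul_of_conj_mul_sq_add (conj_mul_circleRoot_sq_add hu h)

end CircleRoot

theorem add_re_conj_mul_pos {a c : ℝ} {b d : ℂ} (hb : ‖b‖ < a) (hd : ‖d‖ < c) :
    0 < a * c + (conj b * d).re := by
  have hre := abs_re_le_norm (conj b * d)
  rw [norm_mul, norm_conj] at hre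
  nlinarith [neg_abs_le (conj b * d).re, mul_lt_mul'' hb hd (norm_nonneg b) (norm_nonneg d)]

/-- Fixed points of the parallelogram holonomy: when `m = Im(conj b · d) > 1`,
the two points `z_± = −(ad+bc)(ac + Re(conj b · d) ± i√(m²−1))/|ad+bc|²` lie on
the unit circle, the Möbius map of `e^Y e^X` sends each to its negative, and
they are fixed by the Möbius map of `H = e^{−Y}e^{−X}e^{Y}e^{X}`. -/
theorem parallelogram_holonomy_fixed_points
    (a c : ℝ) (ha : 0 < a) (hc : 0 < c) (b d : ℂ)
    (hab : a ^ 2 - ‖b‖ ^ 2 = 1)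
    (hcd : c ^ 2 - ‖d‖ ^ 2 = 1)
    (m : ℝ) (hm : m = Complex.im ((starRingEnd ℂ) b * d)) (hm1 : 1 < m)
    (MX MY MXinv MYinv H : Matrix (Fin 2) (Fin 2) ℂ)
    (hMX : MX = !![(a : ℂ), b; (starRingEnd ℂ) b, (a : ℂ)])
    (hMY : MY = !![(c : ℂ), d; (starRingEnd ℂ) d, (c : ℂ)])
    (hMXinv : MXinv = !![(a : ℂ), -b; -(starRingEnd ℂ) b, (a : ℂ)])
    (hMYinv : MYinv = !![(c : ℂ), -d; -(starRingEnd ℂ) d, (c : ℂ)])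
    (hH : H = MYinv * MXinv * MY * MX)
    (zp zm : ℂ)
    (hzp : zp = -((a : ℂ) * d + b * (c : ℂ))
        * (((a * c : ℝ) : ℂ) + (((Complex.re ((starRingEnd ℂ) b * d)) : ℝ) : ℂ)
            + Complex.I * ((Real.sqrt (m ^ 2 - 1) : ℝ) : ℂ))
        / ((‖(a : ℂ) * d + b * (c : ℂ)‖ : ℝ) : ℂ) ^ 2)
    (hzm : zm = -((a : ℂ) * d + b * (c : ℂ))
        * (((a * c : ℝ) : ℂ) + (((Complex.re ((starRingEnd ℂ) b * d)) : ℝ) : ℂ)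
            - Complex.I * ((Real.sqrt (m ^ 2 - 1) : ℝ) : ℂ))
        / ((‖(a : ℂ) * d + b * (c : ℂ)‖ : ℝ) : ℂ) ^ 2) :
    ((a : ℂ) * d + b * (c : ℂ) ≠ 0 ∧ 0 < a * c + Complex.re ((starRingEnd ℂ) b * d)) ∧
    (‖zp‖ = 1 ∧ ‖zm‖ = 1) ∧
    (∀ z ∈ ({zp, zm} : Set ℂ),
      ((a : ℂ) * (c : ℂ) + (starRingEnd ℂ) b * d) * z + ((a : ℂ) * d + b * (c : ℂ))
        = -z * (((a : ℂ) * (starRingEnd ℂ) d + (starRingEnd ℂ) b * (c : ℂ)) * z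
            + ((a : ℂ) * (c : ℂ) + b * (starRingEnd ℂ) d))) ∧
    (∀ z ∈ ({zp, zm} : Set ℂ),
      (H 0 0 * z + H 0 1) / (H 1 0 * z + H 1 1) = z) := by
  set p : ℂ := a * c + conj b * d
  set u : ℂ := a * d + b * c
  have hN : MY * MX = su11 p u := by
    rw [hMY, hMX, of_ofReal_eq_su11, of_ofReal_eq_su11, su11_mul_su11]
    congr 1 <;> simp only [p, u, conj_ofReal] <;> ring
  have hdetN : (MY * MX).det = 1 := by
    rw [det_mul, hMY, hMX, det_of_ofReal, det_of_ofReal, hab, hcd]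
    norm_num
  have hpu : ‖p‖ ^ 2 - ‖u‖ ^ 2 = 1 := by
    rw [hN, det_su11] at hdetN; exact_mod_cast hdetN
  have hpim : p.im = m := by simp [p, hm]
  have hu0 := ne_zero_of_norm_sq_sub_norm_sq_eq_one hpu (hpim ▸ hm1)
  have ht : √(m ^ 2 - 1) ^ 2 = p.im ^ 2 - 1 := by rw [hpim, Real.sq_sqrt (by nlinarith)]
  have hst := re_sq_add_sq_eq_norm_sq hpu ht
  have hst' := re_sq_add_sq_eq_norm_sq hpu (t := -√(m ^ 2 - 1)) (by rwa [neg_sq])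
  have hpre : p.re = a * c + (conj b * d).re := by simp [p]
  have hzp' : zp = circleRoot u p.re (√(m ^ 2 - 1)) := by
    rw [hzp, circleRoot, hpre]; push_cast; ring
  have hzm' : zm = circleRoot u p.re (-√(m ^ 2 - 1)) := by
    rw [hzm, circleRoot, hpre]; push_cast; ring
  have hroot : ∀ z ∈ ({zp, zm} : Set ℂ), p * z + u = -z * (conj u * z + conj p) := by
    rintro z (rfl | rfl)
    · rw [hzp']; exact mul_circleRoot_add_eq_neg_mul hu0 hst
    · rw [hzm']; exact mul_circleRoot_add_eq_neg_mul hu0 hst'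
  have hb : ‖b‖ < a := by nlinarith [norm_nonneg b]
  have hd : ‖d‖ < c := by nlinarith [norm_nonneg d]
  refine ⟨⟨hu0, add_re_conj_mul_pos hb hd⟩,
    ⟨hzp' ▸ norm_circleRoot hu0 hst, hzm' ▸ norm_circleRoot hu0 hst'⟩,
    fun z hz => by simpa [p, u] using hroot z hz, fun z hz => ?_⟩
  rw [hH, hMYinv, hMXinv, of_neg_offDiag_eq_reflection_conj, of_neg_offDiag_eq_reflection_conj,
    ← hMY, ← hMX]
  exact mobius_holonomy_eq_self (hdetN ▸ one_ne_zero) (by simpa [hN, su11] using hroot z hz)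
end

section
/- Let a, c be positive reals and b, d ∈ ℂ with a² − |b|² = 1 and c² − |d|² = 1. Set M_X = [[a, b], [conj(b), a]], M_Y = [[c, d], [conj(d), c]], M_X⁻¹ = [[a, −b], [−conj(b), a]], M_Y⁻¹ = [[c, −d], [−conj(d), c]]. Then trace(M_X · M_Y · M_X⁻¹ · M_Y⁻¹ · M_Y⁻¹ · M_X⁻¹ · M_Y · M_X) = 2 + 16·(Im(conj(b)·d))²·|ad + bc|². In particular, if Im(conj(b)·d) ≠ 0 and ad + bc ≠ 0, this trace is strictly greater than 2, so the corresponding Möbius transformation has two fixed points on the unit circle. -/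
/-!
A cyclic rotation turns the word into the group commutator of `Y X` and `X Y`, and in `SL(2)`
one has `tr (A B A⁻¹ B⁻¹) = 2 - det (A B - B A)`. Writing `X = a + u`, `Y = c + v` with `u`, `v`
off-diagonal, `Y X X Y - X Y Y X = [a v + c u, [u, v]]`. Here `a v + c u` is off-diagonal with
entry `a d + b c`, while `[u, v] = diag (-2 i t, 2 i t)` with `t = Im (conj b * d)` anticommutes with
it, so the determinant is `-16 t² |a d + b c|²`.
-/

open Matrix

namespace Matrix

variable {R : Type*} [CommRing R]

theorem det_sub_one_fin_two (C : Matrix (Fin 2) (Fin 2) R) :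
    (C - 1).det = C.det - C.trace + 1 := by
  simp [det_fin_two, trace_fin_two]
  ring

-- `C - 1 = (A * B - B * A) * (B * A)⁻¹` for the group commutator `C`, and `det (C - 1) = 2 - tr C`.
theorem trace_commutator_fin_two {A B : Matrix (Fin 2) (Fin 2) R} (hA : A.det = 1)
    (hB : B.det = 1) : (A * B * A⁻¹ * B⁻¹).trace = 2 - (A * B - B * A).det := by
  have hfactor : (A * B * A⁻¹ * B⁻¹ - 1) * (B * A) = A * B - B * A := by
    rw [sub_mul, one_mul, Matrix.mul_assoc (A * B * A⁻¹), ← Matrix.mul_assoc B⁻¹,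
      nonsing_inv_mul B (hB ▸ isUnit_one), Matrix.one_mul, Matrix.mul_assoc (A * B),
      nonsing_inv_mul A (hA ▸ isUnit_one), Matrix.mul_one]
  have hdet := congrArg det hfactor
  rw [det_mul, det_mul, hA, hB, mul_one, det_sub_one_fin_two] at hdet
  rw [← hdet]
  simp [det_mul, hA, hB, det_nonsing_inv]
  ring

end Matrix

def translationMatrix (a : ℝ) (b : ℂ) : Matrix (Fin 2) (Fin 2) ℂ :=
  !![(a : ℂ), b; starRingEnd ℂ b, (a : ℂ)]

theorem det_translationMatrix (a : ℝ) (b : ℂ) :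
    (translationMatrix a b).det = ((a ^ 2 - ‖b‖ ^ 2 : ℝ) : ℂ) := by
  rw [translationMatrix, det_fin_two_of, Complex.mul_conj, Complex.normSq_eq_norm_sq]
  push_cast
  ring

theorem translationMatrix_mul_neg (a : ℝ) (b : ℂ) :
    translationMatrix a b * translationMatrix a (-b) = ((a ^ 2 - ‖b‖ ^ 2 : ℝ) : ℂ) • 1 := by
  rw [← det_translationMatrix]
  ext i j
  fin_cases i <;> fin_cases j <;> simp [translationMatrix, det_fin_two_of] <;> ring

theorem inv_translationMatrix {a : ℝ} {b : ℂ} (h : a ^ 2 - ‖b‖ ^ 2 = 1) :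
    (translationMatrix a b)⁻¹ = translationMatrix a (-b) :=
  inv_eq_right_inv (by rw [translationMatrix_mul_neg, h]; simp)

theorem translationMatrix_lie_commutator (a c : ℝ) (b d : ℂ) :
    let X := translationMatrix a b
    let Y := translationMatrix c d
    let q := (a : ℂ) * d + b * c
    let z := starRingEnd ℂ b * d - b * starRingEnd ℂ d
    Y * X * (X * Y) - X * Y * (Y * X) = !![0, 2 * q * z; -2 * starRingEnd ℂ q * z, 0] := by
  intro X Y q z
  ext i j
  fin_cases i <;> fin_cases j <;> simp [X, Y, q, z, translationMatrix] <;> ring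

theorem det_translationMatrix_lie_commutator (a c : ℝ) (b d : ℂ) :
    let X := translationMatrix a b
    let Y := translationMatrix c d
    (Y * X * (X * Y) - X * Y * (Y * X)).det
      = -(((16 * (starRingEnd ℂ b * d).im ^ 2 * ‖(a : ℂ) * d + b * c‖ ^ 2 : ℝ)) : ℂ) := by
  intro X Y
  have hz : starRingEnd ℂ b * d - b * starRingEnd ℂ d
      = 2 * (starRingEnd ℂ b * d).im * Complex.I := by
    simpa using Complex.sub_conj (starRingEnd ℂ b * d)
  rw [translationMatrix_lie_commutator, hz, det_fin_two_of]
  have hq := Complex.mul_conj ((a : ℂ) * d + b * c)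
  rw [Complex.normSq_eq_norm_sq] at hq
  push_cast at hq ⊢
  linear_combination (-16 * ((starRingEnd ℂ b * d).im : ℂ) ^ 2) * hq
    + 16 * ((starRingEnd ℂ b * d).im : ℂ) ^ 2 * ((a : ℂ) * d + b * c)
      * starRingEnd ℂ ((a : ℂ) * d + b * c) * Complex.I_sq

theorem figure_eight_holonomy_trace_general
    (a c : ℝ) (b d : ℂ)
    (hab : a ^ 2 - ‖b‖ ^ 2 = 1)
    (hcd : c ^ 2 - ‖d‖ ^ 2 = 1)
    (MX MY MXinv MYinv : Matrix (Fin 2) (Fin 2) ℂ)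
    (hMX : MX = !![(a : ℂ), b; (starRingEnd ℂ) b, (a : ℂ)])
    (hMY : MY = !![(c : ℂ), d; (starRingEnd ℂ) d, (c : ℂ)])
    (hMXinv : MXinv = !![(a : ℂ), -b; -(starRingEnd ℂ) b, (a : ℂ)])
    (hMYinv : MYinv = !![(c : ℂ), -d; -(starRingEnd ℂ) d, (c : ℂ)]) :
    (MX * MY * MXinv * MYinv * MYinv * MXinv * MY * MX).trace
      = (((2 + 16 * (Complex.im ((starRingEnd ℂ) b * d)) ^ 2
            * ‖(a : ℂ) * d + b * (c : ℂ)‖ ^ 2 : ℝ)) : ℂ) ∧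
    (Complex.im ((starRingEnd ℂ) b * d) ≠ 0 → (a : ℂ) * d + b * (c : ℂ) ≠ 0 →
      (2 : ℝ) < 2 + 16 * (Complex.im ((starRingEnd ℂ) b * d)) ^ 2
            * ‖(a : ℂ) * d + b * (c : ℂ)‖ ^ 2) := by
  set X := translationMatrix a b
  set Y := translationMatrix c d
  have hX : X.det = 1 := by rw [det_translationMatrix, hab, Complex.ofReal_one]
  have hY : Y.det = 1 := by rw [det_translationMatrix, hcd, Complex.ofReal_one]
  obtain rfl : MXinv = X⁻¹ := by rw [hMXinv, inv_translationMatrix hab]; simp [translationMatrix]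
  obtain rfl : MYinv = Y⁻¹ := by rw [hMYinv, inv_translationMatrix hcd]; simp [translationMatrix]
  obtain rfl : MX = X := hMX
  obtain rfl : MY = Y := hMY
  have hcyclic : (X * Y * X⁻¹ * Y⁻¹ * Y⁻¹ * X⁻¹ * Y * X).trace
      = (Y * X * (X * Y) * (Y * X)⁻¹ * (X * Y)⁻¹).trace := by
    rw [Matrix.mul_assoc _ Y X, trace_mul_comm, Matrix.mul_inv_rev, Matrix.mul_inv_rev]
    simp only [Matrix.mul_assoc]
  refine ⟨?_, fun ht hq => ?_⟩
  · rw [hcyclic, trace_commutator_fin_two (by simp [det_mul, hX, hY]) (by simp [det_mul, hX, hY]),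
      det_translationMatrix_lie_commutator]
    push_cast
    ring
  · have : 0 < 16 * (starRingEnd ℂ b * d).im ^ 2 * ‖(a : ℂ) * d + b * c‖ ^ 2 := by positivity
    linarith

/-- Trace of the figure-eight holonomy `e^{X}e^{Y}e^{−X}e^{−2Y}e^{−X}e^{Y}e^{X}`:
`tr = 2 + 16 Im(conj b · d)² |ad+bc|²`, which exceeds 2 whenever
`Im(conj b · d) ≠ 0` and `ad + bc ≠ 0`. -/
theorem figure_eight_holonomy_trace
    (a c : ℝ) (ha : 0 < a) (hc : 0 < c) (b d : ℂ)
    (hab : a ^ 2 - ‖b‖ ^ 2 = 1)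
    (hcd : c ^ 2 - ‖d‖ ^ 2 = 1)
    (MX MY MXinv MYinv : Matrix (Fin 2) (Fin 2) ℂ)
    (hMX : MX = !![(a : ℂ), b; (starRingEnd ℂ) b, (a : ℂ)])
    (hMY : MY = !![(c : ℂ), d; (starRingEnd ℂ) d, (c : ℂ)])
    (hMXinv : MXinv = !![(a : ℂ), -b; -(starRingEnd ℂ) b, (a : ℂ)])
    (hMYinv : MYinv = !![(c : ℂ), -d; -(starRingEnd ℂ) d, (c : ℂ)]) :
    (MX * MY * MXinv * MYinv * MYinv * MXinv * MY * MX).trace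
      = (((2 + 16 * (Complex.im ((starRingEnd ℂ) b * d)) ^ 2
            * ‖(a : ℂ) * d + b * (c : ℂ)‖ ^ 2 : ℝ)) : ℂ) ∧
    (Complex.im ((starRingEnd ℂ) b * d) ≠ 0 → (a : ℂ) * d + b * (c : ℂ) ≠ 0 →
      (2 : ℝ) < 2 + 16 * (Complex.im ((starRingEnd ℂ) b * d)) ^ 2
            * ‖(a : ℂ) * d + b * (c : ℂ)‖ ^ 2) :=
  figure_eight_holonomy_trace_general a c b d hab hcd MX MY MXinv MYinv hMX hMY hMXinv hMYinv
end
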